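/- arXiv:2402.03999 — 2 statements merged into one kernel-verified Lean document; each statement's English description precedes it below -/
import Mathlib

section
/- For x ≥ 2, the sum over rational primes p ≤ x of (log p)/p equals log x + O(1), i.e., there is an absolute constant C such that |∑_{p ≤ x} (log p)/p − log x| ≤ C for all x ≥ 2. -/
open Finset Real

namespace MertensAux

/-- Chebyshev: sum of log p over primes ≤ n is at most n log 4. -/
lemma theta_le (n : ℕ) :
    ∑ p ∈ Finset.filter Nat.Prime (Finset.range (n + 1)), Real.log p ≤ n * Real.log 4 := by
  have h1 : Real.log (primorial n : ℝ) =
      ∑ p ∈ Finset.filter Nat.Prime (Finset.range (n + 1)), Real.log p := by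
    rw [primorial]
    push_cast
    rw [Real.log_prod]
    intro p hp
    simp only [Finset.mem_filter] at hp
    exact_mod_cast hp.2.pos.ne'
  have h2 : (primorial n : ℝ) ≤ (4 : ℝ) ^ n := by
    exact_mod_cast primorial_le_4_pow n
  calc ∑ p ∈ Finset.filter Nat.Prime (Finset.range (n + 1)), Real.log p
      = Real.log (primorial n : ℝ) := h1.symm
    _ ≤ Real.log ((4:ℝ) ^ n) := Real.log_le_log (by exact_mod_cast (primorial_pos n)) h2
    _ = n * Real.log 4 := by rw [Real.log_pow]

/-- n^n ≤ e^n * n! -/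
lemma pow_le_exp_mul_factorial (n : ℕ) : (n : ℝ) ^ n ≤ Real.exp n * (Nat.factorial n) := by
  induction n with
  | zero => simp
  | succ n ih =>
    rcases Nat.eq_zero_or_pos n with rfl | hn
    · simp [Real.exp_pos, (Real.one_le_exp (by norm_num : (0:ℝ) ≤ 1))]
    have hn0 : (0:ℝ) < n := by exact_mod_cast hn
    have key : ((n:ℝ) + 1) ^ n ≤ (n:ℝ) ^ n * Real.exp 1 := by
      have h1 : ((n:ℝ) + 1) = n * (1 + 1/n) := by field_simp
      have h2 : (1 + 1/(n:ℝ)) ≤ Real.exp (1/n) := by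
        have := Real.add_one_le_exp (1/(n:ℝ)); linarith
      have h3 : (1 + 1/(n:ℝ)) ^ n ≤ Real.exp (1/n) ^ n := by
        apply pow_le_pow_left₀ (by positivity) h2
      rw [h1, mul_pow, ← Real.exp_nat_mul] at *
      have : (n:ℝ) * (1/n) = 1 := by field_simp
      calc ((n:ℝ))^n * (1 + 1/(n:ℝ))^n ≤ (n:ℝ)^n * Real.exp ((n:ℝ) * (1/n)) := by
            rw [Real.exp_nat_mul] at h3 ⊢
            exact mul_le_mul_of_nonneg_left h3 (by positivity)
        _ = (n:ℝ)^n * Real.exp 1 := by rw [this]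
    calc ((n+1 : ℕ) : ℝ) ^ (n+1) = ((n:ℝ)+1) * ((n:ℝ)+1)^n := by push_cast; ring
      _ ≤ ((n:ℝ)+1) * ((n:ℝ)^n * Real.exp 1) := by
          apply mul_le_mul_of_nonneg_left key (by positivity)
      _ ≤ ((n:ℝ)+1) * ((Real.exp n * (Nat.factorial n)) * Real.exp 1) := by
          apply mul_le_mul_of_nonneg_left _ (by positivity)
          exact mul_le_mul_of_nonneg_right ih (Real.exp_pos 1).le
      _ = Real.exp ((n:ℝ)+1) * (Nat.factorial (n+1)) := by
          rw [Real.exp_add]; push_cast [Nat.factorial_succ]; ring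
      _ = Real.exp ((n+1 : ℕ):ℝ) * (Nat.factorial (n+1)) := by norm_num

end MertensAux

namespace MertensAux2
open MertensAux

lemma nu_eq {p n : ℕ} (hp : p.Prime) :
    (Nat.factorial n).factorization p = ∑ i ∈ Finset.Ico 1 (n+1), n / p ^ i := by
  haveI := Fact.mk hp
  rw [Nat.factorization_def _ hp]
  exact padicValNat_factorial (Nat.lt_succ_of_le (Nat.log_le_self p n))

lemma nu_lower {p n : ℕ} (hp : p.Prime) (hpn : p ≤ n) :
    (n : ℝ) / p - 1 ≤ ((Nat.factorial n).factorization p : ℝ) := by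
  have h1 : n / p ≤ (Nat.factorial n).factorization p := by
    rw [nu_eq hp]
    have h2p := hp.two_le
    have : (1 : ℕ) ∈ Finset.Ico 1 (n+1) := Finset.mem_Ico.mpr ⟨le_refl 1, by omega⟩
    simpa using Finset.single_le_sum (f := fun i => n / p ^ i) (fun i _ => Nat.zero_le _) this
  have hp0 : (0:ℝ) < p := by exact_mod_cast hp.pos
  have h2 : (n : ℝ) / p - 1 ≤ ((n / p : ℕ) : ℝ) := by
    have hmod := Nat.div_add_mod n p
    have hlt : n % p < p := Nat.mod_lt _ hp.pos
    have : (n:ℝ) < p * ((n/p : ℕ):ℝ) + p := by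
      have := congrArg (fun k : ℕ => (k:ℝ)) hmod
      push_cast at this
      push_cast
      nlinarith [ (by exact_mod_cast hlt : ((n % p : ℕ):ℝ) < (p:ℝ)) ]
    rw [sub_le_iff_le_add, div_le_iff₀ hp0]
    nlinarith
  calc (n : ℝ) / p - 1 ≤ ((n / p : ℕ) : ℝ) := h2
    _ ≤ _ := by exact_mod_cast h1

lemma nu_upper {p n : ℕ} (hp : p.Prime) (hpn : p ≤ n) :
    ((Nat.factorial n).factorization p : ℝ) ≤ (n:ℝ) / p + n / (p * (p - 1)) := by
  have hp1 : (1:ℝ) < p := by exact_mod_cast hp.one_lt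
  have hp0 : (0:ℝ) < p := by linarith
  set r : ℝ := 1 / p with hr
  have hr0 : 0 ≤ r := by positivity
  have hr1 : r < 1 := by rw [hr, div_lt_one hp0]; exact hp1
  have hn1 : 1 ≤ n := hp.one_lt.le.trans hpn
  rw [nu_eq hp]
  push_cast
  have step1 : ∑ i ∈ Finset.Ico 1 (n+1), ((n / p ^ i : ℕ) : ℝ)
      ≤ ∑ i ∈ Finset.Ico 1 (n+1), (n:ℝ) * r ^ i := by
    apply Finset.sum_le_sum
    intro i _
    calc ((n / p ^ i : ℕ) : ℝ) ≤ (n:ℝ) / (p:ℝ)^i := by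
          have := Nat.cast_div_le (α := ℝ) (m := n) (n := p ^ i)
          push_cast at this
          exact this
      _ = (n:ℝ) * r ^ i := by rw [hr, div_pow, one_pow]; ring
  have split : Finset.Ico 1 (n+1) = Finset.Ico 1 2 ∪ Finset.Ico 2 (n+1) := by
    rw [Finset.Ico_union_Ico_eq_Ico] <;> omega
  have step2 : ∑ i ∈ Finset.Ico 2 (n+1), r ^ i ≤ r ^ 2 * (1 - r)⁻¹ := by
    rw [Finset.sum_Ico_eq_sum_range]
    have : ∀ j, r ^ (2 + j) = r ^ 2 * r ^ j := fun j => pow_add r 2 j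
    simp_rw [this]
    rw [← Finset.mul_sum]
    apply mul_le_mul_of_nonneg_left _ (by positivity)
    exact Summable.sum_le_tsum _ (fun i _ => by positivity)
      (summable_geometric_of_lt_one hr0 hr1) |>.trans
      (le_of_eq (tsum_geometric_of_lt_one hr0 hr1))
  have key : ∑ i ∈ Finset.Ico 1 (n+1), (n:ℝ) * r ^ i ≤ (n:ℝ)/p + n / (p * (p-1)) := by
    rw [split, Finset.sum_union (by
      apply Finset.Ico_disjoint_Ico_consecutive)]
    have h1 : ∑ i ∈ Finset.Ico 1 2, (n:ℝ) * r ^ i = (n:ℝ) * r := by simp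
    rw [h1, ← Finset.mul_sum]
    have h2 : (n:ℝ) * ∑ i ∈ Finset.Ico 2 (n+1), r ^ i ≤ (n:ℝ) * (r^2 * (1-r)⁻¹) :=
      mul_le_mul_of_nonneg_left step2 (by positivity)
    have h3 : (n:ℝ) * r = (n:ℝ)/p := by rw [hr]; ring
    have h4 : r^2 * (1-r)⁻¹ = 1 / (p * (p-1)) := by
      have h5 : (1:ℝ) - r = (p-1)/p := by rw [hr]; field_simp
      rw [hr, h5, inv_div, div_pow, one_pow]
      rw [div_mul_div_comm, one_mul]
      have hpm : (0:ℝ) < (p:ℝ) - 1 := by linarith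
      rw [div_eq_div_iff (by positivity) (by positivity)]
      ring
    have h6 : (n:ℝ) * (r^2 * (1-r)⁻¹) = n / (p * (p-1)) := by
      rw [h4]; ring
    linarith [h2, h3, h6]
  linarith [step1, key]

end MertensAux2

namespace MertensAux3
open MertensAux MertensAux2

lemma primeFactors_factorial (n : ℕ) :
    (Nat.factorial n).primeFactors = Finset.filter Nat.Prime (Finset.range (n+1)) := by
  ext p
  simp only [Nat.mem_primeFactors, Finset.mem_filter, Finset.mem_range, Nat.lt_succ_iff]
  constructor
  · rintro ⟨hp, hdvd, -⟩
    exact ⟨(Nat.Prime.dvd_factorial hp).mp hdvd, hp⟩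
  · rintro ⟨hle, hp⟩
    exact ⟨hp, (Nat.Prime.dvd_factorial hp).mpr hle, Nat.factorial_ne_zero n⟩

lemma log_factorial (n : ℕ) :
    Real.log (Nat.factorial n : ℝ) =
      ∑ p ∈ Finset.filter Nat.Prime (Finset.range (n+1)),
        ((Nat.factorial n).factorization p : ℝ) * Real.log p := by
  conv_lhs => rw [← Nat.factorization_prod_pow_eq_self (Nat.factorial_ne_zero n)]
  rw [Nat.prod_factorization_eq_prod_primeFactors, primeFactors_factorial]
  push_cast
  rw [Real.log_prod]
  · apply Finset.sum_congr rfl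
    intro p hp
    simp only [Finset.mem_filter] at hp
    rw [Real.log_pow]
  · intro p hp
    simp only [Finset.mem_filter] at hp
    exact pow_ne_zero _ (by exact_mod_cast hp.2.pos.ne')

noncomputable def K : ℝ := ∑' m : ℕ, 4 * (1 / (m : ℝ) ^ (3/2 : ℝ))

lemma summable_aux : Summable (fun m : ℕ => 4 * (1 / (m : ℝ) ^ (3/2 : ℝ))) :=
  (Real.summable_one_div_nat_rpow.mpr (by norm_num)).mul_left 4

lemma K_nonneg : 0 ≤ K := tsum_nonneg (fun m => by positivity)

lemma term_le {p : ℕ} (hp : p.Prime) :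
    Real.log p / (p * (p - 1)) ≤ 4 * (1 / (p : ℝ) ^ (3/2 : ℝ)) := by
  have hp2 : (2:ℝ) ≤ p := by exact_mod_cast hp.two_le
  have hp0 : (0:ℝ) < p := by linarith
  have hpm : (0:ℝ) < (p:ℝ) - 1 := by linarith
  -- log p ≤ 2 * sqrt p
  have hlog : Real.log p ≤ 2 * (p:ℝ) ^ (1/2 : ℝ) := by
    have h1 : Real.log p = 2 * Real.log ((p:ℝ) ^ (1/2 : ℝ)) := by
      rw [Real.log_rpow hp0]; ring
    have h2 : Real.log ((p:ℝ) ^ (1/2:ℝ)) ≤ (p:ℝ) ^ (1/2:ℝ) - 1 :=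
      Real.log_le_sub_one_of_pos (by positivity)
    have h3 : (0:ℝ) ≤ (p:ℝ) ^ (1/2:ℝ) := by positivity
    linarith
  rw [div_le_iff₀ (by positivity)]
  have hsplit : (4:ℝ) * (1 / (p:ℝ) ^ (3/2:ℝ)) * ((p:ℝ) * ((p:ℝ) - 1))
      = 4 * ((p:ℝ) * ((p:ℝ)-1) / (p:ℝ) ^ (3/2:ℝ)) := by ring
  rw [hsplit]
  have hmul : 2 * (p:ℝ)^(1/2:ℝ) * (p:ℝ)^(3/2:ℝ) = 2 * (p:ℝ)^(2:ℕ) := by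
    rw [mul_assoc, ← Real.rpow_add hp0,
      show ((1:ℝ)/2 + 3/2) = ((2:ℕ):ℝ) by norm_num, Real.rpow_natCast]
  have hkey : 2 * (p:ℝ)^(1/2:ℝ) * (p:ℝ)^(3/2:ℝ) ≤ 4 * ((p:ℝ) * ((p:ℝ)-1)) := by
    rw [hmul]
    nlinarith
  have h7 : 2 * (p:ℝ)^(1/2:ℝ) ≤ 4 * ((p:ℝ)*((p:ℝ)-1) / (p:ℝ)^(3/2:ℝ)) := by
    rw [show (4:ℝ) * ((p:ℝ)*((p:ℝ)-1) / (p:ℝ)^(3/2:ℝ))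
        = 4*((p:ℝ)*((p:ℝ)-1))/(p:ℝ)^(3/2:ℝ) by ring]
    rw [le_div_iff₀ (by positivity)]
    exact hkey
  linarith

end MertensAux3

namespace MertensMain
open MertensAux MertensAux2 MertensAux3

lemma tail_le (n : ℕ) :
    ∑ p ∈ Finset.filter Nat.Prime (Finset.range (n+1)),
      Real.log p / ((p:ℝ) * ((p:ℝ) - 1)) ≤ K := by
  calc ∑ p ∈ Finset.filter Nat.Prime (Finset.range (n+1)),
        Real.log p / ((p:ℝ) * ((p:ℝ) - 1))
      ≤ ∑ p ∈ Finset.filter Nat.Prime (Finset.range (n+1)),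
        4 * (1 / (p : ℝ) ^ (3/2 : ℝ)) := by
        apply Finset.sum_le_sum
        intro p hp
        simp only [Finset.mem_filter] at hp
        exact term_le hp.2
    _ ≤ K := Summable.sum_le_tsum _ (fun m _ => by positivity) summable_aux

lemma main_nat (n : ℕ) (hn : 1 ≤ n) :
    |(∑ p ∈ Finset.filter Nat.Prime (Finset.range (n+1)), Real.log p / p)
      - Real.log n| ≤ Real.log 4 + 1 + K := by
  set F := Finset.filter Nat.Prime (Finset.range (n+1)) with hF
  set S := ∑ p ∈ F, Real.log p / (p:ℝ) with hS
  have hn0 : (0:ℝ) < n := by exact_mod_cast hn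
  have hfact0 : (0:ℝ) < (Nat.factorial n : ℝ) := by exact_mod_cast (Nat.factorial_pos n)
  -- upper and lower bounds on log n!
  have hT_up : Real.log (Nat.factorial n : ℝ) ≤ (n:ℝ) * Real.log n := by
    calc Real.log (Nat.factorial n : ℝ) ≤ Real.log ((n:ℝ) ^ n) := by
          apply Real.log_le_log hfact0
          exact_mod_cast Nat.factorial_le_pow n
      _ = (n:ℝ) * Real.log n := by rw [Real.log_pow]
  have hT_lo : (n:ℝ) * Real.log n - n ≤ Real.log (Nat.factorial n : ℝ) := by
    have h1 := pow_le_exp_mul_factorial n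
    have h2 : Real.log ((n:ℝ) ^ n) ≤ Real.log (Real.exp n * (Nat.factorial n)) :=
      Real.log_le_log (by positivity) h1
    rw [Real.log_pow, Real.log_mul (Real.exp_pos _).ne' hfact0.ne', Real.log_exp] at h2
    linarith
  -- pointwise facts on F
  have hmemF : ∀ p ∈ F, p.Prime ∧ p ≤ n := by
    intro p hp
    simp only [hF, Finset.mem_filter, Finset.mem_range, Nat.lt_succ_iff] at hp
    exact ⟨hp.2, hp.1⟩
  have hlog_nonneg : ∀ p ∈ F, 0 ≤ Real.log p := by
    intro p hp
    exact Real.log_nonneg (by exact_mod_cast (hmemF p hp).1.one_lt.le)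
  -- n * S ≤ log n! + θ
  have h_up : (n:ℝ) * S ≤ Real.log (Nat.factorial n : ℝ) + ∑ p ∈ F, Real.log p := by
    rw [hS, Finset.mul_sum, log_factorial, ← Finset.sum_add_distrib]
    apply Finset.sum_le_sum
    intro p hp
    obtain ⟨hpp, hpn⟩ := hmemF p hp
    have h1 := nu_lower hpp hpn
    have h2 := hlog_nonneg p hp
    have : (n:ℝ) * (Real.log p / p) = ((n:ℝ)/p) * Real.log p := by ring
    rw [this]
    nlinarith
  -- log n! ≤ n * S + n * K
  have h_lo : Real.log (Nat.factorial n : ℝ) ≤ (n:ℝ) * S + (n:ℝ) * K := by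
    have step : Real.log (Nat.factorial n : ℝ)
        ≤ ∑ p ∈ F, ((n:ℝ) * (Real.log p / p) + (n:ℝ) * (Real.log p / ((p:ℝ)*((p:ℝ)-1)))) := by
      rw [log_factorial]
      apply Finset.sum_le_sum
      intro p hp
      obtain ⟨hpp, hpn⟩ := hmemF p hp
      have h1 := nu_upper hpp hpn
      have h2 := hlog_nonneg p hp
      have hp0 : (0:ℝ) < p := by exact_mod_cast hpp.pos
      have hpm : (0:ℝ) < (p:ℝ) - 1 := by
        have : (2:ℝ) ≤ p := by exact_mod_cast hpp.two_le
        linarith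
      have e1 : (n:ℝ) * (Real.log p / p) = ((n:ℝ)/p) * Real.log p := by ring
      have e2 : (n:ℝ) * (Real.log p / ((p:ℝ)*((p:ℝ)-1)))
          = ((n:ℝ)/((p:ℝ)*((p:ℝ)-1))) * Real.log p := by ring
      rw [e1, e2, ← add_mul]
      exact mul_le_mul_of_nonneg_right h1 h2
    rw [Finset.sum_add_distrib, ← Finset.mul_sum, ← Finset.mul_sum] at step
    have htail : (n:ℝ) * ∑ p ∈ F, Real.log p / ((p:ℝ)*((p:ℝ)-1)) ≤ (n:ℝ) * K :=
      mul_le_mul_of_nonneg_left (tail_le n) hn0.le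
    calc Real.log (Nat.factorial n : ℝ) ≤ _ := step
      _ ≤ (n:ℝ) * S + (n:ℝ) * K := by rw [hS]; linarith
  have htheta := theta_le n
  rw [← hF] at htheta
  -- combine
  have hup2 : S ≤ Real.log n + Real.log 4 := by
    have : (n:ℝ) * S ≤ (n:ℝ) * (Real.log n + Real.log 4) := by
      calc (n:ℝ) * S ≤ Real.log (Nat.factorial n : ℝ) + ∑ p ∈ F, Real.log p := h_up
        _ ≤ (n:ℝ) * Real.log n + (n:ℝ) * Real.log 4 := by linarith
        _ = (n:ℝ) * (Real.log n + Real.log 4) := by ring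
    exact le_of_mul_le_mul_left this hn0
  have hlo2 : Real.log n - 1 - K ≤ S := by
    have : (n:ℝ) * (Real.log n - 1 - K) ≤ (n:ℝ) * S := by
      have : (n:ℝ) * Real.log n - n - (n:ℝ) * K ≤ (n:ℝ) * S := by linarith
      calc (n:ℝ) * (Real.log n - 1 - K) = (n:ℝ) * Real.log n - n - (n:ℝ)*K := by ring
        _ ≤ (n:ℝ) * S := this
    exact le_of_mul_le_mul_left this hn0
  rw [abs_le]
  have h4 : (0:ℝ) ≤ Real.log 4 := Real.log_nonneg (by norm_num)
  have hK := K_nonneg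
  constructor <;> [linarith; linarith]

end MertensMain

theorem mertens_first :
    ∃ C : ℝ, ∀ x : ℝ, 2 ≤ x →
      |(∑ p ∈ Finset.filter Nat.Prime (Finset.range (Nat.floor x + 1)),
          Real.log p / p) - Real.log x| ≤ C := by
  refine ⟨Real.log 4 + 1 + MertensAux3.K + Real.log 2, fun x hx => ?_⟩
  set n := Nat.floor x with hn
  have hx0 : (0:ℝ) < x := by linarith
  have hn2 : 2 ≤ n := Nat.le_floor (by exact_mod_cast hx)
  have hn0 : (0:ℝ) < n := by exact_mod_cast (by omega : 0 < n)
  have hnx : (n:ℝ) ≤ x := Nat.floor_le hx0.le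
  have hxn : x < n + 1 := Nat.lt_floor_add_one x
  have hlog1 : Real.log n ≤ Real.log x := Real.log_le_log hn0 hnx
  have hlog2 : Real.log x ≤ Real.log 2 + Real.log n := by
    have h1 : x ≤ 2 * n := by
      have : (n:ℝ) + 1 ≤ 2 * n := by
        have : (2:ℝ) ≤ n := by exact_mod_cast hn2
        linarith
      linarith
    calc Real.log x ≤ Real.log (2 * n) := Real.log_le_log hx0 h1
      _ = Real.log 2 + Real.log n := Real.log_mul (by norm_num) hn0.ne'
  have hmain := MertensMain.main_nat n (by omega)
  rw [abs_le] at hmain ⊢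
  constructor <;> [linarith [hmain.1, hmain.2]; linarith [hmain.1, hmain.2]]
end

section
/- For x ≥ 3, the sum over rational primes p ≤ x of 1/p equals log log x + O(1), i.e., there is an absolute constant C with |∑_{p ≤ x} 1/p − log log x| ≤ C for all x ≥ 3. -/
open Finset Real

namespace MertensAux

/-- primes up to `N` -/
def P (N : ℕ) : Finset ℕ := Finset.filter Nat.Prime (Finset.range (N + 1))

noncomputable def W (N : ℕ) : ℝ := ∑ p ∈ P N, Real.log p / p

lemma mem_P {N p : ℕ} (h : p ∈ P N) : p.Prime ∧ p ≤ N := by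
  simp only [P, mem_filter, mem_range] at h
  exact ⟨h.2, by omega⟩

/-- factorial lower bound -/
lemma pow_le_fact (N : ℕ) : (N : ℝ) ^ N ≤ ((Nat.factorial N) : ℝ) * Real.exp N := by
  induction N with
  | zero => simp
  | succ n ih =>
    rcases Nat.eq_zero_or_pos n with rfl | hn
    · simpa using Real.one_le_exp (by norm_num)
    have hn' : (0:ℝ) < n := by exact_mod_cast hn
    have h1 : ((n:ℝ) + 1) ^ n ≤ (n:ℝ) ^ n * Real.exp 1 := by
      have h2 : (n:ℝ) + 1 ≤ (n:ℝ) * Real.exp (1 / n) := by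
        have := Real.add_one_le_exp (1 / (n:ℝ))
        calc (n:ℝ) + 1 = (n:ℝ) * (1 / n + 1) := by field_simp; ring
        _ ≤ (n:ℝ) * Real.exp (1 / n) := by
            apply mul_le_mul_of_nonneg_left this hn'.le
      calc ((n:ℝ) + 1) ^ n ≤ ((n:ℝ) * Real.exp (1 / n)) ^ n := by
            apply pow_le_pow_left₀ (by positivity) h2
      _ = (n:ℝ) ^ n * Real.exp (1 / n) ^ n := mul_pow _ _ _
      _ = (n:ℝ) ^ n * Real.exp 1 := by
            rw [← Real.exp_nat_mul]
            field_simp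
    push_cast
    calc ((n:ℝ) + 1) ^ (n + 1) = ((n:ℝ) + 1) * ((n:ℝ) + 1) ^ n := by ring
    _ ≤ ((n:ℝ) + 1) * ((n:ℝ) ^ n * Real.exp 1) := by
        apply mul_le_mul_of_nonneg_left h1 (by positivity)
    _ ≤ ((n:ℝ) + 1) * ((((Nat.factorial n) : ℝ) * Real.exp n) * Real.exp 1) := by
        apply mul_le_mul_of_nonneg_left _ (by positivity)
        apply mul_le_mul_of_nonneg_right ih (Real.exp_pos _).le
    _ = (((n:ℝ) + 1) * ((Nat.factorial n) : ℝ)) * (Real.exp n * Real.exp 1) := by ring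
    _ = ((Nat.factorial (n+1)) : ℝ) * Real.exp (n + 1) := by
        rw [Nat.factorial_succ, ← Real.exp_add]
        push_cast
        ring_nf

lemma log_factorial_lower {N : ℕ} (hN : 1 ≤ N) :
    (N : ℝ) * Real.log N - N ≤ Real.log ((Nat.factorial N)) := by
  have h := pow_le_fact N
  have h1 : Real.log ((N:ℝ) ^ N) ≤ Real.log (((Nat.factorial N) : ℝ) * Real.exp N) :=
    Real.log_le_log (by positivity) h
  rw [Real.log_pow, Real.log_mul (by positivity) (Real.exp_ne_zero _), Real.log_exp] at h1
  linarith

lemma log_factorial_upper (N : ℕ) : Real.log ((Nat.factorial N)) ≤ (N : ℝ) * Real.log N := by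
  rcases Nat.eq_zero_or_pos N with rfl | hN
  · simp
  have h : ((Nat.factorial N) : ℝ) ≤ (N:ℝ) ^ N := by exact_mod_cast Nat.factorial_le_pow N
  calc Real.log ((Nat.factorial N)) ≤ Real.log ((N:ℝ) ^ N) :=
        Real.log_le_log (by positivity) h
  _ = (N : ℝ) * Real.log N := by rw [Real.log_pow]

/-- Chebyshev: sum of log p over primes up to N -/
lemma theta_le_s9 (N : ℕ) : ∑ p ∈ P N, Real.log p ≤ (N : ℝ) * Real.log 4 := by
  have h1 : ∑ p ∈ P N, Real.log p = Real.log (primorial N) := by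
    rw [primorial]
    rw [Nat.cast_prod, Real.log_prod]
    · push_cast; rfl
    · intro p hp
      have h2 := (mem_P hp).1
      exact_mod_cast h2.pos.ne'
  rw [h1]
  have h2 : (primorial N : ℝ) ≤ (4:ℝ) ^ N := by exact_mod_cast primorial_le_4_pow N
  calc Real.log (primorial N) ≤ Real.log ((4:ℝ) ^ N) := by
        apply Real.log_le_log _ h2
        exact_mod_cast Nat.pos_of_ne_zero (by
          intro h
          simpa [h] using (primorial_pos N))
  _ = (N : ℝ) * Real.log 4 := by rw [Real.log_pow]

lemma legendre {N : ℕ} (hN : 1 ≤ N) :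
    Real.log (Nat.factorial N) =
      ∑ p ∈ P N, ((∑ i ∈ Finset.Ico 1 (N+1), N / p ^ i : ℕ) : ℝ) * Real.log p := by
  rw [Real.log_nat_eq_sum_factorization]
  have hsub : (Nat.factorial N).factorization.support ⊆ P N := by
    intro p hp
    rw [Nat.support_factorization] at hp
    have hp1 : p.Prime := Nat.prime_of_mem_primeFactors hp
    have hp2 : p ∣ Nat.factorial N := Nat.dvd_of_mem_primeFactors hp
    simp only [P, mem_filter, mem_range]
    have h3 : p ≤ N := (Nat.Prime.dvd_factorial hp1).mp hp2
    exact ⟨by omega, hp1⟩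
  rw [Finsupp.sum_of_support_subset _ hsub (fun p t => (t : ℝ) * Real.log p) (fun i _ => by simp)]
  apply Finset.sum_congr rfl
  intro p hp
  obtain ⟨hp1, hp2⟩ := mem_P hp
  haveI : Fact p.Prime := ⟨hp1⟩
  rw [Nat.factorization_def _ hp1, padicValNat_factorial (Nat.lt_succ_of_le (Nat.log_le_self _ _))]

lemma key_sqrt {a b : ℝ} (ha : 0 < a) (hab : a ≤ b) (h : b ^ 2 - a ^ 2 = 1) :
    1 / (b ^ 2 * b) ≤ 2 * (1 / a - 1 / b) := by
  have hb : 0 < b := lt_of_lt_of_le ha hab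
  have h2 : b - a = 1 / (a + b) := by
    rw [eq_div_iff (by positivity)]
    nlinarith
  have h3 : 1 / a - 1 / b = 1 / (a * b * (a + b)) := by
    rw [div_sub_div _ _ ha.ne' hb.ne', one_mul, mul_one, h2, div_div]
    ring_nf
  rw [h3, ← mul_div_assoc, mul_one, div_le_div_iff₀ (by positivity) (by positivity)]
  nlinarith [mul_nonneg (mul_nonneg (sub_nonneg.2 hab) ha.le) hb.le,
    mul_nonneg (mul_nonneg (sub_nonneg.2 hab) hb.le) hb.le]

lemma log_le_two_sqrt {m : ℕ} (hm : 1 ≤ m) : Real.log m ≤ 2 * Real.sqrt m := by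
  have h0 : (0:ℝ) < m := by exact_mod_cast hm
  have h1 : Real.log m = 2 * Real.log (Real.sqrt m) := by
    rw [Real.log_sqrt h0.le]; ring
  rw [h1]
  have h2 : Real.log (Real.sqrt m) ≤ Real.sqrt m - 1 :=
    Real.log_le_sub_one_of_pos (Real.sqrt_pos.mpr h0)
  nlinarith [Real.sqrt_nonneg (m:ℝ)]

lemma log_div_sq_le {m : ℕ} (hm : 2 ≤ m) :
    Real.log m / (m:ℝ) ^ 2 ≤ 4 * (1 / Real.sqrt (m - 1 : ℕ) - 1 / Real.sqrt m) := by
  have h0 : (0:ℝ) < m := by positivity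
  have hm1 : (1:ℝ) ≤ ((m - 1 : ℕ) : ℝ) := by
    have : 1 ≤ m - 1 := by omega
    exact_mod_cast this
  have ha : (0:ℝ) < Real.sqrt (m - 1 : ℕ) := Real.sqrt_pos.mpr (by linarith)
  have hab : Real.sqrt ((m - 1 : ℕ) : ℝ) ≤ Real.sqrt m := by
    apply Real.sqrt_le_sqrt
    have : ((m - 1 : ℕ) : ℝ) ≤ m := by
      have : m - 1 ≤ m := by omega
      exact_mod_cast this
    linarith
  have hsq : (Real.sqrt m) ^ 2 - (Real.sqrt ((m-1:ℕ):ℝ)) ^ 2 = 1 := by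
    rw [Real.sq_sqrt h0.le, Real.sq_sqrt (by linarith : (0:ℝ) ≤ ((m-1:ℕ):ℝ))]
    have : ((m - 1 : ℕ) : ℝ) = (m:ℝ) - 1 := by
      have h2 : (m:ℝ) ≥ 2 := by exact_mod_cast hm
      push_cast [Nat.cast_sub (by omega : 1 ≤ m)]
      ring
    rw [this]; ring
  have hkey := key_sqrt ha hab hsq
  have hlog := log_le_two_sqrt (by omega : 1 ≤ m)
  have hmsq : (Real.sqrt m) ^ 2 = (m:ℝ) := Real.sq_sqrt h0.le
  have hss : Real.sqrt m * Real.sqrt m = (m:ℝ) := Real.mul_self_sqrt h0.le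
  rw [hmsq] at hkey
  have hs0 : Real.sqrt (m:ℝ) ≠ 0 := by positivity
  calc Real.log m / (m:ℝ) ^ 2 ≤ 2 * Real.sqrt m / (m:ℝ) ^ 2 := by
        exact div_le_div_of_nonneg_right hlog (by positivity) |>.trans_eq rfl
  _ = 2 * (1 / ((m:ℝ) * Real.sqrt m)) := by
        field_simp
        linear_combination hss
  _ ≤ 2 * (2 * (1 / Real.sqrt (m-1:ℕ) - 1 / Real.sqrt m)) := by linarith
  _ = 4 * (1 / Real.sqrt (m - 1 : ℕ) - 1 / Real.sqrt m) := by ring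

lemma sum_log_div_sq_le (N : ℕ) :
    ∑ m ∈ Finset.Ico 2 (N + 1), Real.log m / (m:ℝ) ^ 2 ≤ 4 := by
  have h1 : ∑ m ∈ Finset.Ico 2 (N + 1), Real.log m / (m:ℝ) ^ 2 ≤
      ∑ m ∈ Finset.Ico 2 (N + 1), 4 * (1 / Real.sqrt (m - 1 : ℕ) - 1 / Real.sqrt m) := by
    apply Finset.sum_le_sum
    intro m hm
    exact log_div_sq_le (Finset.mem_Ico.mp hm).1
  refine h1.trans ?_
  rcases Nat.lt_or_ge N 2 with hN | hN
  · rw [Finset.Ico_eq_empty (by omega)]; norm_num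
  have h2 : ∑ m ∈ Finset.Ico 2 (N + 1), 4 * (1 / Real.sqrt (m - 1 : ℕ) - 1 / Real.sqrt m)
      = 4 * (1 / Real.sqrt 1 - 1 / Real.sqrt N) := by
    rw [← Finset.mul_sum]
    congr 1
    have h3 : ∀ k, ∑ m ∈ Finset.Ico 2 (k + 2), (1 / Real.sqrt (m - 1 : ℕ) - 1 / Real.sqrt m)
        = 1 / Real.sqrt 1 - 1 / Real.sqrt (k+1 : ℕ) := by
      intro k
      induction k with
      | zero => rw [Finset.Ico_self, Finset.sum_empty]; norm_num
      | succ n ih =>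
        have e1 : n + 2 - 1 = n + 1 := by omega
        rw [Finset.sum_Ico_succ_top (by omega), ih, e1]
        push_cast
        ring
    have hrep : N + 1 = (N - 2 + 1) + 2 := by omega
    have hNN : N - 2 + 1 + 1 = N := by omega
    rw [hrep, h3 (N - 2 + 1), hNN]
  rw [h2]
  have h4 : 0 ≤ 1 / Real.sqrt N := by positivity
  have h5 : Real.sqrt 1 = 1 := Real.sqrt_one
  rw [h5]
  linarith

lemma P_subset_Ico (N : ℕ) : P N ⊆ Finset.Ico 2 (N + 1) := by
  intro p hp
  obtain ⟨h1, h2⟩ := mem_P hp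
  exact Finset.mem_Ico.mpr ⟨h1.two_le, by omega⟩

lemma geom_tail {p : ℕ} (hp : 2 ≤ p) (M : ℕ) :
    ∑ i ∈ Finset.Ico 2 M, ((1:ℝ) / p) ^ i ≤ 2 / (p:ℝ) ^ 2 := by
  have hp0 : (0:ℝ) < p := by positivity
  set r : ℝ := 1 / p with hr
  have hr0 : 0 ≤ r := by positivity
  have hr1 : r < 1 := by
    rw [hr, div_lt_one hp0]
    exact_mod_cast by omega
  have hrhalf : r ≤ 1 / 2 := by
    rw [hr]
    apply div_le_div_of_nonneg_left one_pos.le (by norm_num)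
    exact_mod_cast hp
  rcases Nat.lt_or_ge M 2 with hM | hM
  · rw [Finset.Ico_eq_empty (by omega), Finset.sum_empty]
    positivity
  rw [Finset.sum_Ico_eq_sum_range]
  have h1 : ∀ i, r ^ (2 + i) = r ^ 2 * r ^ i := fun i => by rw [pow_add]
  simp only [h1, ← Finset.mul_sum]
  have h2 : ∑ i ∈ Finset.range (M - 2), r ^ i ≤ (1 - r)⁻¹ := by
    calc ∑ i ∈ Finset.range (M - 2), r ^ i ≤ ∑' i : ℕ, r ^ i :=
          Summable.sum_le_tsum _ (fun i _ => by positivity) (summable_geometric_of_lt_one hr0 hr1)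
    _ = (1 - r)⁻¹ := tsum_geometric_of_lt_one hr0 hr1
  have h3 : (1 - r)⁻¹ ≤ 2 := by
    rw [inv_le_comm₀ (by linarith) (by norm_num)]
    linarith
  have h4 : r ^ 2 = 1 / (p:ℝ) ^ 2 := by
    rw [hr]; field_simp
  calc r ^ 2 * ∑ i ∈ Finset.range (M - 2), r ^ i ≤ r ^ 2 * 2 := by
        apply mul_le_mul_of_nonneg_left (h2.trans h3) (by positivity)
  _ = 2 / (p:ℝ) ^ 2 := by rw [h4]; ring

lemma nat_div_real_lt {N p : ℕ} (hp : 0 < p) : (N:ℝ) / p < ((N / p : ℕ) : ℝ) + 1 := by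
  have hp0 : (0:ℝ) < p := by exact_mod_cast hp
  rw [div_lt_iff₀ hp0]
  have h : N < (N / p + 1) * p := by
    have h1 := Nat.div_add_mod N p
    have h2 := Nat.mod_lt N hp
    have h3 : (N / p + 1) * p = p * (N / p) + p := by ring
    linarith
  exact_mod_cast h

lemma mertens1_upper {N : ℕ} (hN : 1 ≤ N) : W N ≤ Real.log N + Real.log 4 := by
  have hN0 : (0:ℝ) < N := by exact_mod_cast hN
  have key : (N:ℝ) * W N ≤ (N:ℝ) * (Real.log N + Real.log 4) := by
    have h1 : (N:ℝ) * W N ≤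
        (∑ p ∈ P N, ((∑ i ∈ Finset.Ico 1 (N+1), N / p ^ i : ℕ) : ℝ) * Real.log p)
          + ∑ p ∈ P N, Real.log p := by
      rw [W, Finset.mul_sum, ← Finset.sum_add_distrib]
      apply Finset.sum_le_sum
      intro p hp
      obtain ⟨hp1, hp2⟩ := mem_P hp
      have hlogp : 0 ≤ Real.log p := Real.log_nonneg (by exact_mod_cast hp1.one_lt.le)
      have hdiv : ((N / p : ℕ) : ℕ) ≤ ∑ i ∈ Finset.Ico 1 (N+1), N / p ^ i := by
        have hmem : 1 ∈ Finset.Ico 1 (N + 1) := Finset.mem_Ico.mpr ⟨le_refl _, by omega⟩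
        have := Finset.single_le_sum (f := fun i => N / p ^ i) (fun i _ => Nat.zero_le _) hmem
        simpa using this
      have hlt : (N:ℝ) / p < ((N / p : ℕ) : ℝ) + 1 := nat_div_real_lt hp1.pos
      have h2 : (N:ℝ) * (Real.log p / p) = (N:ℝ) / p * Real.log p := by ring
      rw [h2]
      have h3 : (N:ℝ) / p ≤ ((∑ i ∈ Finset.Ico 1 (N+1), N / p ^ i : ℕ) : ℝ) + 1 := by
        have : ((N / p : ℕ) : ℝ) ≤ ((∑ i ∈ Finset.Ico 1 (N+1), N / p ^ i : ℕ) : ℝ) := by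
          exact_mod_cast hdiv
        linarith [hlt.le]
      calc (N:ℝ) / p * Real.log p ≤
            (((∑ i ∈ Finset.Ico 1 (N+1), N / p ^ i : ℕ) : ℝ) + 1) * Real.log p :=
            mul_le_mul_of_nonneg_right h3 hlogp
      _ = ((∑ i ∈ Finset.Ico 1 (N+1), N / p ^ i : ℕ) : ℝ) * Real.log p + Real.log p := by ring
    rw [← legendre hN] at h1
    have h4 := theta_le_s9 N
    have h5 := log_factorial_upper N
    rw [mul_add]
    linarith
  exact le_of_mul_le_mul_left key hN0

lemma mertens1_lower {N : ℕ} (hN : 1 ≤ N) : Real.log N - 9 ≤ W N := by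
  have hN0 : (0:ℝ) < N := by exact_mod_cast hN
  have key : (N:ℝ) * (Real.log N - 9) ≤ (N:ℝ) * W N := by
    have h1 : Real.log (Nat.factorial N) ≤
        ∑ p ∈ P N, ((N:ℝ) / p + (N:ℝ) * (2 / (p:ℝ)^2)) * Real.log p := by
      rw [legendre hN]
      apply Finset.sum_le_sum
      intro p hp
      obtain ⟨hp1, hp2⟩ := mem_P hp
      have hp0 : (0:ℝ) < p := by exact_mod_cast hp1.pos
      have hlogp : 0 ≤ Real.log p := Real.log_nonneg (by exact_mod_cast hp1.one_lt.le)
      apply mul_le_mul_of_nonneg_right _ hlogp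
      calc ((∑ i ∈ Finset.Ico 1 (N+1), N / p ^ i : ℕ) : ℝ)
          = ∑ i ∈ Finset.Ico 1 (N+1), ((N / p ^ i : ℕ) : ℝ) := by push_cast; rfl
      _ ≤ ∑ i ∈ Finset.Ico 1 (N+1), (N:ℝ) / (p:ℝ) ^ i := by
          apply Finset.sum_le_sum
          intro i _
          have := Nat.cast_div_le (α := ℝ) (m := N) (n := p ^ i)
          push_cast at this ⊢
          exact this
      _ = (N:ℝ) / p + ∑ i ∈ Finset.Ico 2 (N+1), (N:ℝ) / (p:ℝ) ^ i := by
          rw [Finset.sum_eq_sum_Ico_succ_bot (by omega : 1 < N + 1)]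
          norm_num
      _ ≤ (N:ℝ) / p + (N:ℝ) * (2 / (p:ℝ)^2) := by
          have h2 : ∑ i ∈ Finset.Ico 2 (N+1), (N:ℝ) / (p:ℝ) ^ i
              = (N:ℝ) * ∑ i ∈ Finset.Ico 2 (N+1), ((1:ℝ)/p) ^ i := by
            rw [Finset.mul_sum]
            apply Finset.sum_congr rfl
            intro i _
            rw [div_pow, one_pow]
            ring
          rw [h2]
          have h3 := geom_tail hp1.two_le (N+1)
          have := mul_le_mul_of_nonneg_left h3 hN0.le
          linarith
    have h4 : ∑ p ∈ P N, ((N:ℝ) / p + (N:ℝ) * (2 / (p:ℝ)^2)) * Real.log p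
        = (N:ℝ) * W N + 2 * (N:ℝ) * ∑ p ∈ P N, Real.log p / (p:ℝ)^2 := by
      rw [W, Finset.mul_sum, Finset.mul_sum, ← Finset.sum_add_distrib]
      apply Finset.sum_congr rfl
      intro p hp
      ring
    have h5 : ∑ p ∈ P N, Real.log p / (p:ℝ)^2 ≤ 4 := by
      calc ∑ p ∈ P N, Real.log p / (p:ℝ)^2
          ≤ ∑ m ∈ Finset.Ico 2 (N+1), Real.log m / (m:ℝ)^2 := by
            apply Finset.sum_le_sum_of_subset_of_nonneg (P_subset_Ico N)
            intro m hm _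
            have h6 : 2 ≤ m := (Finset.mem_Ico.mp hm).1
            have : (1:ℝ) ≤ m := by exact_mod_cast by omega
            have hl : 0 ≤ Real.log m := Real.log_nonneg this
            positivity
      _ ≤ 4 := sum_log_div_sq_le N
    have h7 := log_factorial_lower hN
    rw [h4] at h1
    nlinarith
  exact le_of_mul_le_mul_left key hN0

lemma mertens1 {N : ℕ} (hN : 1 ≤ N) : |W N - Real.log N| ≤ 9 := by
  rw [abs_le]
  constructor
  · linarith [mertens1_lower hN]
  · have h := mertens1_upper hN
    have h4 : Real.log 4 ≤ 3 := by
      have := Real.log_le_sub_one_of_pos (by norm_num : (0:ℝ) < 4)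
      linarith
    linarith

noncomputable def bb (n : ℕ) : ℝ := if n.Prime then Real.log n / n else 0

noncomputable def ff (n : ℕ) : ℝ := 1 / Real.log n

lemma Wb (N : ℕ) : W N = ∑ n ∈ Finset.range (N+1), bb n := by
  rw [W, P, Finset.sum_filter]
  exact Finset.sum_congr rfl fun n _ => rfl

lemma W_succ (N : ℕ) : W (N+1) = W N + bb (N+1) := by
  rw [Wb, Wb, Finset.sum_range_succ]

/-- telescoping sums starting at 2 -/
lemma tele (g : ℕ → ℝ) {N : ℕ} (hN : 2 ≤ N) :
    ∑ n ∈ Finset.Ico 2 N, (g (n+1) - g n) = g N - g 2 := by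
  induction N, hN using Nat.le_induction with
  | base => simp
  | succ n hn ih => rw [Finset.sum_Ico_succ_top hn, ih]; ring

/-- Abel summation identity -/
lemma abel {N : ℕ} (hN : 2 ≤ N) :
    ∑ n ∈ Finset.Ico 2 (N+1), bb n * ff n
      = W N * ff N + ∑ n ∈ Finset.Ico 2 N, W n * (ff n - ff (n+1)) := by
  induction N, hN using Nat.le_induction with
  | base =>
    rw [Finset.Ico_self, Finset.sum_empty]
    have h2 : W 2 = bb 2 := by
      rw [Wb]
      rw [Finset.sum_range_succ, Finset.sum_range_succ, Finset.sum_range_one]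
      have h0 : bb 0 = 0 := by simp [bb]
      have h1 : bb 1 = 0 := by simp [bb]
      rw [h0, h1]; ring
    rw [h2]
    rw [show (2:ℕ) + 1 = 3 from rfl]
    rw [Finset.sum_Ico_succ_top (by omega), Finset.Ico_self, Finset.sum_empty]
    ring
  | succ n hn ih =>
    rw [Finset.sum_Ico_succ_top (by omega : 2 ≤ n + 1), ih,
      Finset.sum_Ico_succ_top (by omega : 2 ≤ n), W_succ]
    ring

lemma S_eq (N : ℕ) :
    ∑ p ∈ P N, (1:ℝ)/p = ∑ n ∈ Finset.Ico 2 (N+1), bb n * ff n := by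
  rw [P, Finset.sum_filter]
  have hsub : Finset.Ico 2 (N+1) ⊆ Finset.range (N+1) := by
    rw [Finset.range_eq_Ico]
    exact Finset.Ico_subset_Ico (by omega) le_rfl
  rw [← Finset.sum_subset hsub]
  · apply Finset.sum_congr rfl
    intro n hn
    have hn2 : 2 ≤ n := (Finset.mem_Ico.mp hn).1
    by_cases hp : n.Prime
    · simp only [bb, ff, if_pos hp]
      have hlog : Real.log n ≠ 0 := by
        have : (1:ℝ) < n := by exact_mod_cast by omega
        exact (Real.log_pos this).ne'
      field_simp
    · simp [bb, hp]
  · intro x hxr hx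
    have hxlt : x < N + 1 := Finset.mem_range.mp hxr
    have : x < 2 := by
      by_contra h
      exact hx (Finset.mem_Ico.mpr ⟨by omega, hxlt⟩)
    interval_cases x
    · simp
    · simp [Nat.not_prime_one]

lemma half_le_log_two : (1/2 : ℝ) ≤ Real.log 2 := by
  rw [Real.le_log_iff_exp_le (by norm_num)]
  have h2 : Real.exp (1/2) * Real.exp (1/2) = Real.exp 1 := by
    rw [← Real.exp_add]; norm_num
  nlinarith [Real.exp_pos (1/2 : ℝ), Real.exp_one_lt_d9]

lemma log_two_le_one : Real.log 2 ≤ 1 := by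
  have := Real.log_le_sub_one_of_pos (by norm_num : (0:ℝ) < 2)
  linarith

lemma one_le_log_three : (1:ℝ) ≤ Real.log 3 := by
  rw [Real.le_log_iff_exp_le (by norm_num)]
  have := Real.exp_one_lt_d9
  linarith

lemma one_le_log {n : ℕ} (hn : 3 ≤ n) : (1:ℝ) ≤ Real.log n := by
  refine one_le_log_three.trans (Real.log_le_log (by norm_num) ?_)
  exact_mod_cast hn

lemma log_pos_of_two_le {n : ℕ} (hn : 2 ≤ n) : (1/2 : ℝ) ≤ Real.log n := by
  refine half_le_log_two.trans (Real.log_le_log (by norm_num) ?_)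
  exact_mod_cast hn

lemma ff_antitone {n : ℕ} (hn : 2 ≤ n) : 0 ≤ ff n - ff (n+1) := by
  have ha := log_pos_of_two_le hn
  have hb : Real.log ((n:ℕ):ℝ) ≤ Real.log ((n+1 : ℕ):ℝ) := by
    apply Real.log_le_log (by positivity)
    exact_mod_cast Nat.le_succ n
  rw [ff, ff, sub_nonneg]
  exact one_div_le_one_div_of_le (by linarith) hb

lemma term_est {n : ℕ} (hn : 2 ≤ n) :
    |Real.log n * (ff n - ff (n+1)) -
      (Real.log (Real.log ((n+1 : ℕ) : ℝ)) - Real.log (Real.log n))|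
      ≤ 4 * (1/((n:ℝ)-1) - 1/n) := by
  have hn0 : (0:ℝ) < n := by positivity
  have hn2 : (2:ℝ) ≤ n := by exact_mod_cast hn
  set a := Real.log (n : ℝ) with ha_def
  set b := Real.log ((n+1 : ℕ) : ℝ) with hb_def
  have hcast : ((n+1 : ℕ) : ℝ) = (n:ℝ) + 1 := by push_cast; ring
  have ha : (1/2 : ℝ) ≤ a := log_pos_of_two_le hn
  have hb1 : ((n:ℝ)) ≤ ((n+1:ℕ):ℝ) := by rw [hcast]; linarith
  have hab : a ≤ b := Real.log_le_log hn0 hb1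
  have hb : (1/2 : ℝ) ≤ b := le_trans ha hab
  have ha0 : (0:ℝ) < a := by linarith
  have hb0 : (0:ℝ) < b := by linarith
  have hba : b - a ≤ 1/(n:ℝ) := by
    have h1 : b - a = Real.log (((n:ℝ)+1)/n) := by
      rw [Real.log_div (by linarith) hn0.ne', ← hcast]
    have h2 : Real.log (((n:ℝ)+1)/n) ≤ ((n:ℝ)+1)/n - 1 :=
      Real.log_le_sub_one_of_pos (by positivity)
    have h3 : ((n:ℝ)+1)/n - 1 = 1/n := by field_simp; ring
    linarith
  have hba0 : 0 ≤ b - a := by linarith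
  -- X := log n * (ff n - ff (n+1)) equals (b-a)/b
  have hX : Real.log n * (ff n - ff (n+1)) = (b - a)/b := by
    rw [ff, ff, ← ha_def, ← hb_def]
    field_simp
  -- Y := log b - log a bounds
  have hup : Real.log b - Real.log a ≤ (b - a)/a := by
    have h1 : Real.log b - Real.log a = Real.log (b/a) := by
      rw [Real.log_div hb0.ne' ha0.ne']
    have h2 : Real.log (b/a) ≤ b/a - 1 := Real.log_le_sub_one_of_pos (by positivity)
    have h3 : b/a - 1 = (b - a)/a := by field_simp
    linarith
  have hlo : (b - a)/b ≤ Real.log b - Real.log a := by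
    have h1 : Real.log a - Real.log b = Real.log (a/b) := by
      rw [Real.log_div ha0.ne' hb0.ne']
    have h2 : Real.log (a/b) ≤ a/b - 1 := Real.log_le_sub_one_of_pos (by positivity)
    have h3 : a/b - 1 = -((b - a)/b) := by field_simp; ring
    linarith
  have hdiff : (b - a)/a - (b - a)/b ≤ 4/(n:ℝ)^2 := by
    have h1 : (b - a)/a - (b - a)/b = (b - a)^2/(a*b) := by
      field_simp
    rw [h1, div_le_div_iff₀ (by positivity) (by positivity)]
    have h4 : (b - a) * (n:ℝ) ≤ 1 := (le_div_iff₀ hn0).mp hba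
    have h5 : ((b - a) * (n:ℝ))^2 ≤ 1 := by
      nlinarith [mul_nonneg hba0 hn0.le]
    nlinarith [ha, hb, mul_nonneg hba0 hba0]
  have hfin : 4/(n:ℝ)^2 ≤ 4 * (1/((n:ℝ)-1) - 1/n) := by
    have hn1 : ((n:ℝ) - 1) ≠ 0 := by linarith
    have h1 : 1/((n:ℝ)-1) - 1/n = 1/((n:ℝ)*((n:ℝ)-1)) := by
      rw [div_sub_div _ _ hn1 hn0.ne', one_mul, mul_one,
        show (n:ℝ) - ((n:ℝ)-1) = 1 by ring, mul_comm]
    have h3 : (0:ℝ) < (n:ℝ)*((n:ℝ)-1) := by nlinarith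
    rw [h1, mul_one_div, div_le_div_iff₀ (by positivity) h3]
    nlinarith
  rw [hX, abs_sub_comm, abs_of_nonneg (by linarith)]
  linarith

lemma mertens2_nat {N : ℕ} (hN : 3 ≤ N) :
    |∑ p ∈ P N, (1:ℝ)/p - Real.log (Real.log N)| ≤ 33 := by
  have hN2 : 2 ≤ N := by omega
  rw [S_eq, abel hN2]
  have hsplit : ∑ n ∈ Finset.Ico 2 N, W n * (ff n - ff (n+1))
      = (∑ n ∈ Finset.Ico 2 N, Real.log n * (ff n - ff (n+1)))
        + ∑ n ∈ Finset.Ico 2 N, (W n - Real.log n) * (ff n - ff (n+1)) := by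
    rw [← Finset.sum_add_distrib]
    exact Finset.sum_congr rfl fun n _ => by ring
  have hdelta_sum : ∑ n ∈ Finset.Ico 2 N, (ff n - ff (n+1)) = ff 2 - ff N := by
    have h := tele (fun n => -ff n) hN2
    have h2 : ∑ n ∈ Finset.Ico 2 N, (ff n - ff (n+1))
        = ∑ n ∈ Finset.Ico 2 N, ((fun k => -ff k) (n+1) - (fun k => -ff k) n) := by
      exact Finset.sum_congr rfl fun n _ => by simp; ring
    rw [h2, h]; simp; ring
  have hc2 : ((2:ℕ):ℝ) = 2 := by norm_num
  have hff2 : ff 2 ≤ 2 := by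
    rw [ff, hc2, div_le_iff₀ (by linarith [half_le_log_two])]
    linarith [half_le_log_two]
  have hffN : 0 ≤ ff N := by
    rw [ff]
    have := one_le_log hN
    positivity
  have hR : |∑ n ∈ Finset.Ico 2 N, (W n - Real.log n) * (ff n - ff (n+1))| ≤ 18 := by
    calc |∑ n ∈ Finset.Ico 2 N, (W n - Real.log n) * (ff n - ff (n+1))|
        ≤ ∑ n ∈ Finset.Ico 2 N, |(W n - Real.log n) * (ff n - ff (n+1))| :=
          Finset.abs_sum_le_sum_abs _ _
    _ ≤ ∑ n ∈ Finset.Ico 2 N, 9 * (ff n - ff (n+1)) := by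
        apply Finset.sum_le_sum
        intro n hn
        have hn2 : 2 ≤ n := (Finset.mem_Ico.mp hn).1
        have hd := ff_antitone hn2
        rw [abs_mul, abs_of_nonneg hd]
        exact mul_le_mul_of_nonneg_right (mertens1 (by omega)) hd
    _ = 9 * (ff 2 - ff N) := by rw [← Finset.mul_sum, hdelta_sum]
    _ ≤ 18 := by linarith
  have hLL : Real.log (Real.log N) - Real.log (Real.log ((2:ℕ):ℝ))
      = ∑ n ∈ Finset.Ico 2 N, (Real.log (Real.log ((n+1 : ℕ) : ℝ)) - Real.log (Real.log n)) := by
    exact (tele (fun n => Real.log (Real.log (n : ℝ))) hN2).symm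
  have honeminus : ∑ n ∈ Finset.Ico 2 N, ((1:ℝ)/((n:ℝ)-1) - 1/n) ≤ 1 := by
    have h := tele (fun n => -(1/((n:ℝ)-1))) hN2
    have h2 : ∑ n ∈ Finset.Ico 2 N, ((1:ℝ)/((n:ℝ)-1) - 1/n)
        = ∑ n ∈ Finset.Ico 2 N, ((fun k : ℕ => -(1/((k:ℝ)-1))) (n+1) - (fun k : ℕ => -(1/((k:ℝ)-1))) n) := by
      apply Finset.sum_congr rfl
      intro n hn
      have hn2 : 2 ≤ n := (Finset.mem_Ico.mp hn).1
      simp only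
      push_cast
      ring
    rw [h2, h]
    push_cast
    have hN1 : (0:ℝ) < (N:ℝ) - 1 := by
      have : (3:ℝ) ≤ N := by exact_mod_cast hN
      linarith
    have : 0 ≤ 1/((N:ℝ)-1) := by positivity
    norm_num
    linarith
  have hmain : |(∑ n ∈ Finset.Ico 2 N, Real.log n * (ff n - ff (n+1)))
      - (Real.log (Real.log N) - Real.log (Real.log ((2:ℕ):ℝ)))| ≤ 4 := by
    rw [hLL, ← Finset.sum_sub_distrib]
    calc |∑ n ∈ Finset.Ico 2 N, (Real.log n * (ff n - ff (n+1))
            - (Real.log (Real.log ((n+1 : ℕ) : ℝ)) - Real.log (Real.log n)))|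
        ≤ ∑ n ∈ Finset.Ico 2 N, |Real.log n * (ff n - ff (n+1))
            - (Real.log (Real.log ((n+1 : ℕ) : ℝ)) - Real.log (Real.log n))| :=
          Finset.abs_sum_le_sum_abs _ _
    _ ≤ ∑ n ∈ Finset.Ico 2 N, 4 * ((1:ℝ)/((n:ℝ)-1) - 1/n) := by
        apply Finset.sum_le_sum
        intro n hn
        exact term_est (Finset.mem_Ico.mp hn).1
    _ = 4 * ∑ n ∈ Finset.Ico 2 N, ((1:ℝ)/((n:ℝ)-1) - 1/n) := by rw [← Finset.mul_sum]
    _ ≤ 4 := by linarith [honeminus]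
  have hWff : |W N * ff N - 1| ≤ 9 := by
    have h1 := mertens1 (show 1 ≤ N by omega)
    have hlogN : 1 ≤ Real.log N := one_le_log hN
    rw [ff]
    have h2 : W N * (1/Real.log N) - 1 = (W N - Real.log N) / Real.log N := by
      field_simp
    rw [h2, abs_div, abs_of_nonneg (by linarith : (0:ℝ) ≤ Real.log N)]
    rw [div_le_iff₀ (by linarith : (0:ℝ) < Real.log N)]
    nlinarith [abs_nonneg (W N - Real.log N)]
  have hLL2 : |Real.log (Real.log ((2:ℕ):ℝ))| ≤ 1 := by
    have hc : ((2:ℕ):ℝ) = 2 := by norm_num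
    rw [hc]
    have h1 : Real.log (Real.log 2) ≤ 0 :=
      Real.log_nonpos (by linarith [half_le_log_two]) log_two_le_one
    have h2 : Real.log (1/2 : ℝ) ≤ Real.log (Real.log 2) :=
      Real.log_le_log (by norm_num) half_le_log_two
    have h3 : Real.log (1/2 : ℝ) = -Real.log 2 := by
      rw [one_div, Real.log_inv]
    rw [abs_le]
    constructor <;> [linarith [log_two_le_one]; linarith]
  have hdecomp : W N * ff N + ((∑ n ∈ Finset.Ico 2 N, Real.log n * (ff n - ff (n+1)))
        + ∑ n ∈ Finset.Ico 2 N, (W n - Real.log n) * (ff n - ff (n+1)))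
        - Real.log (Real.log N)
      = (W N * ff N - 1)
        + ((∑ n ∈ Finset.Ico 2 N, Real.log n * (ff n - ff (n+1)))
            - (Real.log (Real.log N) - Real.log (Real.log ((2:ℕ):ℝ))))
        + (∑ n ∈ Finset.Ico 2 N, (W n - Real.log n) * (ff n - ff (n+1)))
        + (1 - Real.log (Real.log ((2:ℕ):ℝ))) := by
    ring
  rw [hsplit, hdecomp]
  have habs1 := abs_add_le (W N * ff N - 1)
    ((∑ n ∈ Finset.Ico 2 N, Real.log n * (ff n - ff (n+1)))
      - (Real.log (Real.log N) - Real.log (Real.log ((2:ℕ):ℝ))))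
  have habs2 := abs_add_le ((W N * ff N - 1)
    + ((∑ n ∈ Finset.Ico 2 N, Real.log n * (ff n - ff (n+1)))
        - (Real.log (Real.log N) - Real.log (Real.log ((2:ℕ):ℝ)))))
    (∑ n ∈ Finset.Ico 2 N, (W n - Real.log n) * (ff n - ff (n+1)))
  have habs3 := abs_add_le (((W N * ff N - 1)
    + ((∑ n ∈ Finset.Ico 2 N, Real.log n * (ff n - ff (n+1)))
        - (Real.log (Real.log N) - Real.log (Real.log ((2:ℕ):ℝ)))))
    + ∑ n ∈ Finset.Ico 2 N, (W n - Real.log n) * (ff n - ff (n+1)))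
    (1 - Real.log (Real.log ((2:ℕ):ℝ)))
  have h9 : |1 - Real.log (Real.log ((2:ℕ):ℝ))| ≤ 2 := by
    have h10 := abs_le.mp hLL2
    rw [abs_le]
    constructor <;> linarith [h10.1, h10.2]
  linarith [habs1, habs2, habs3, hWff, hmain, hR, h9]

end MertensAux

theorem mertens_second :
    ∃ C : ℝ, ∀ x : ℝ, 3 ≤ x →
      |(∑ p ∈ Finset.filter Nat.Prime (Finset.range (Nat.floor x + 1)),
          (1 : ℝ) / p) - Real.log (Real.log x)| ≤ C := by
  use 34
  intro x hx
  set N := Nat.floor x with hNdef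
  have hN3 : 3 ≤ N := Nat.le_floor (by exact_mod_cast hx)
  have h0x : (0:ℝ) < x := by linarith
  have hfl : (N:ℝ) ≤ x := Nat.floor_le h0x.le
  have hfu : x < (N:ℝ) + 1 := by exact_mod_cast Nat.lt_floor_add_one x
  have hNpos : (3:ℝ) ≤ (N:ℝ) := by exact_mod_cast hN3
  have hu : (1:ℝ) ≤ Real.log N := MertensAux.one_le_log hN3
  have huv : Real.log N ≤ Real.log x := Real.log_le_log (by linarith) hfl
  have hvw : Real.log x ≤ Real.log ((N:ℝ)+1) := Real.log_le_log h0x hfu.le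
  have hlog1 : Real.log ((N:ℝ)+1) - Real.log N ≤ 1/(N:ℝ) := by
    have h1 : Real.log ((N:ℝ)+1) - Real.log N = Real.log (((N:ℝ)+1)/N) := by
      rw [Real.log_div (by linarith) (by linarith)]
    have h2 : Real.log (((N:ℝ)+1)/N) ≤ ((N:ℝ)+1)/N - 1 :=
      Real.log_le_sub_one_of_pos (by positivity)
    have h3 : ((N:ℝ)+1)/N - 1 = 1/(N:ℝ) := by field_simp; ring
    linarith
  have hLLdiff : |Real.log (Real.log x) - Real.log (Real.log N)| ≤ 1 := by
    have h1 : 0 ≤ Real.log (Real.log x) - Real.log (Real.log N) :=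
      sub_nonneg.mpr (Real.log_le_log (by linarith) huv)
    have h2 : Real.log (Real.log x) - Real.log (Real.log N)
        = Real.log (Real.log x / Real.log N) := by
      rw [Real.log_div (by linarith) (by linarith)]
    have h3 : Real.log (Real.log x / Real.log N) ≤ Real.log x / Real.log N - 1 :=
      Real.log_le_sub_one_of_pos (div_pos (by linarith) (by linarith))
    have h4 : Real.log x / Real.log N - 1 = (Real.log x - Real.log N)/Real.log N := by
      field_simp
    have h5 : (Real.log x - Real.log N)/Real.log N ≤ Real.log x - Real.log N :=
      div_le_self (by linarith) hu
    have h6 : 1/(N:ℝ) ≤ 1 := by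
      rw [div_le_one (by linarith)]; linarith
    rw [abs_of_nonneg h1]
    linarith
  have hmain := MertensAux.mertens2_nat hN3
  have hPeq : Finset.filter Nat.Prime (Finset.range (N + 1)) = MertensAux.P N := rfl
  rw [hPeq]
  have htri := abs_sub_le (∑ p ∈ MertensAux.P N, (1:ℝ)/p)
    (Real.log (Real.log N)) (Real.log (Real.log x))
  have habs : |Real.log (Real.log N) - Real.log (Real.log x)|
      = |Real.log (Real.log x) - Real.log (Real.log N)| := abs_sub_comm _ _
  linarith
end
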